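/- Let S ⊆ ℂ be a finite set with at most 2 elements and let U = ℂ ∖ S. Then the conformal metric ((1 + |z|²) / ∏_{a ∈ S} |z − a|²)·|dz|² on U is complete: every continuous, piecewise continuously differentiable path γ : [0,1) → U that is divergent in U satisfies ∫₀¹ (√(1 + |γ(t)|²) / ∏_{a ∈ S} |γ(t) − a|)·|γ'(t)| dt = +∞ (the empty product being 1). (This is the completeness computation in the paper's construction of Voss-type weakly complete flat fronts in H³ whose ratio of canonical forms omits precisely a prescribed set E of q ≤ 3 points, with ω = dξ/∏_{j}(ξ − α_j) and ρ = ξ: a divergent curve must tend to one of the punctures or to ∞, and the integral ∫ √(1+|ξ|²)/∏|ξ − α_j| |dξ| along it diverges whenever q ≤ 3.) -/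

import Mathlib

open MeasureTheory

open Set

/-- A path `γ : [0,1) → ℂ` is *divergent* in an open set `U ⊆ ℂ`: it eventually
leaves every compact subset of `U`. -/
def DivergentPath (U : Set ℂ) (γ : ℝ → ℂ) : Prop :=
  ∀ K : Set ℂ, K ⊆ U → IsCompact K →
    ∃ t₀ ∈ Set.Ico (0 : ℝ) 1, ∀ t, t₀ < t → t < 1 → γ t ∉ K

/-- `γ : [0,1) → ℂ` is continuous and piecewise continuously differentiable,
with derivative `γ'` away from a locally finite set of exceptional points. -/
def PiecewiseC1 (γ γ' : ℝ → ℂ) : Prop :=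
  ContinuousOn γ (Set.Ico 0 1) ∧
  ∃ D : Set ℝ, (∀ b : ℝ, b < 1 → (D ∩ Set.Icc 0 b).Finite) ∧
    (∀ t ∈ Set.Ico (0 : ℝ) 1 \ D, HasDerivAt γ (γ' t) t) ∧
    ContinuousOn γ' (Set.Ico 0 1 \ D)

/-- The conformal metric `lam(z)² |dz|²` on `U` is *complete*: every divergent
piecewise C¹ path in `U` has infinite length. -/
def MetricComplete (U : Set ℂ) (lam : ℂ → ℝ) : Prop :=
  ∀ γ γ' : ℝ → ℂ, (∀ t ∈ Set.Ico (0 : ℝ) 1, γ t ∈ U) →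
    PiecewiseC1 γ γ' → DivergentPath U γ →
    ∫⁻ t in Set.Ico (0 : ℝ) 1, ENNReal.ofReal (lam (γ t) * ‖γ' t‖) = ⊤


noncomputable def vossC (S : Finset ℂ) : ℝ := 4 * ∏ a ∈ S, (1 + ‖a‖)

noncomputable def vossF (S : Finset ℂ) (z : ℂ) : ℝ :=
  Real.log (2 + ‖z‖ ^ 2) + ∑ a ∈ S, Real.log (1 + ‖z - a‖⁻¹)

theorem vossC_nonneg (S : Finset ℂ) : 0 ≤ vossC S := by
  unfold vossC
  positivity

/-- Cauchy-Schwarz in ℝ² via complex components. -/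
theorem cs2 (z w : ℂ) : |z.re * w.re + z.im * w.im| ≤ ‖z‖ * ‖w‖ := by
  have hz : ‖z‖ ^ 2 = z.re ^ 2 + z.im ^ 2 := by
    rw [Complex.sq_norm, Complex.normSq_apply]; ring
  have hw : ‖w‖ ^ 2 = w.re ^ 2 + w.im ^ 2 := by
    rw [Complex.sq_norm, Complex.normSq_apply]; ring
  have h2 : (z.re * w.re + z.im * w.im) ^ 2 ≤ (‖z‖ * ‖w‖) ^ 2 := by
    have h3 : (‖z‖ * ‖w‖) ^ 2 = (z.re ^ 2 + z.im ^ 2) * (w.re ^ 2 + w.im ^ 2) := by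
      rw [mul_pow, hz, hw]
    nlinarith [sq_nonneg (z.re * w.im - z.im * w.re)]
  calc |z.re * w.re + z.im * w.im| = Real.sqrt ((z.re * w.re + z.im * w.im) ^ 2) :=
        (Real.sqrt_sq_eq_abs _).symm
    _ ≤ Real.sqrt ((‖z‖ * ‖w‖) ^ 2) := Real.sqrt_le_sqrt h2
    _ = ‖z‖ * ‖w‖ := Real.sqrt_sq (by positivity)

theorem hasDerivAt_normsq_comp {γ : ℝ → ℂ} {w : ℂ} {t : ℝ} (hγ : HasDerivAt γ w t) :
    HasDerivAt (fun u => (γ u).re ^ 2 + (γ u).im ^ 2)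
      (2 * ((γ t).re * w.re + (γ t).im * w.im)) t := by
  have hre : HasDerivAt (fun u => (γ u).re) w.re t := by
    simpa [Function.comp_def] using (Complex.reCLM.hasFDerivAt.comp_hasDerivAt t hγ)
  have him : HasDerivAt (fun u => (γ u).im) w.im t := by
    simpa [Function.comp_def] using (Complex.imCLM.hasFDerivAt.comp_hasDerivAt t hγ)
  have := (hre.fun_pow 2).fun_add (him.fun_pow 2)
  convert this using 1
  · rfl
  · rfl
  push_cast
  ring

theorem hasDerivAt_norm_comp {γ : ℝ → ℂ} {w : ℂ} {t : ℝ} (hγ : HasDerivAt γ w t)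
    (hz : γ t ≠ 0) : ∃ d : ℝ, HasDerivAt (fun u => ‖γ u‖) d t ∧ |d| ≤ ‖w‖ := by
  have hq := hasDerivAt_normsq_comp hγ
  have hQ : (γ t).re ^ 2 + (γ t).im ^ 2 = ‖γ t‖ ^ 2 := by
    rw [Complex.sq_norm, Complex.normSq_apply]; ring
  have hrpos : 0 < ‖γ t‖ := norm_pos_iff.2 hz
  have hQpos : 0 < (γ t).re ^ 2 + (γ t).im ^ 2 := by rw [hQ]; positivity
  have hs : HasDerivAt (fun u => Real.sqrt ((γ u).re ^ 2 + (γ u).im ^ 2))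
      (1 / (2 * Real.sqrt ((γ t).re ^ 2 + (γ t).im ^ 2)) *
        (2 * ((γ t).re * w.re + (γ t).im * w.im))) t :=
    (Real.hasDerivAt_sqrt hQpos.ne').comp t hq
  have heq : (fun u => ‖γ u‖) = (fun u => Real.sqrt ((γ u).re ^ 2 + (γ u).im ^ 2)) := by
    funext u
    rw [show (γ u).re ^ 2 + (γ u).im ^ 2 = ‖γ u‖ ^ 2 from by
      rw [Complex.sq_norm, Complex.normSq_apply]; ring,
      Real.sqrt_sq (norm_nonneg _)]
  have hsq : Real.sqrt ((γ t).re ^ 2 + (γ t).im ^ 2) = ‖γ t‖ := by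
    rw [hQ, Real.sqrt_sq (norm_nonneg _)]
  refine ⟨_, heq ▸ hs, ?_⟩
  have hd : 1 / (2 * Real.sqrt ((γ t).re ^ 2 + (γ t).im ^ 2)) *
      (2 * ((γ t).re * w.re + (γ t).im * w.im)) =
      ((γ t).re * w.re + (γ t).im * w.im) / ‖γ t‖ := by
    rw [hsq, one_div, inv_mul_eq_div, mul_div_mul_left _ _ (two_ne_zero)]
  rw [hd, abs_div, abs_of_pos hrpos, div_le_iff₀ hrpos]
  calc |(γ t).re * w.re + (γ t).im * w.im| ≤ ‖γ t‖ * ‖w‖ := cs2 _ _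
    _ = ‖w‖ * ‖γ t‖ := by ring

theorem norm_le_sqrt (z : ℂ) : ‖z‖ ≤ Real.sqrt (1 + ‖z‖ ^ 2) := by
  conv_lhs => rw [← Real.sqrt_sq (norm_nonneg z)]
  exact Real.sqrt_le_sqrt (by nlinarith [sq_nonneg ‖z‖])

theorem one_le_sqrt' (z : ℂ) : 1 ≤ Real.sqrt (1 + ‖z‖ ^ 2) := by
  rw [show (1:ℝ) = Real.sqrt 1 from (Real.sqrt_one).symm]
  exact Real.sqrt_le_sqrt (by nlinarith [sq_nonneg ‖z‖, Real.sqrt_one])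

theorem voss_key_ineq (S : Finset ℂ) (hS : S.card ≤ 2) (z : ℂ) (hz : ∀ a ∈ S, z ≠ a) :
    2 / Real.sqrt (1 + ‖z‖ ^ 2) + ∑ a ∈ S, 1 / ‖z - a‖ ≤
      vossC S * (Real.sqrt (1 + ‖z‖ ^ 2) / ∏ a ∈ S, ‖z - a‖) := by
  set R := Real.sqrt (1 + ‖z‖ ^ 2) with hRdef
  have hR1 : 1 ≤ R := one_le_sqrt' z
  have hRpos : 0 < R := lt_of_lt_of_le one_pos hR1
  have hu : ∀ a ∈ S, 0 < ‖z - a‖ := fun a ha => norm_pos_iff.2 (sub_ne_zero.2 (hz a ha))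
  have hQpos : 0 < ∏ a ∈ S, ‖z - a‖ := Finset.prod_pos hu
  set Q := ∏ a ∈ S, ‖z - a‖ with hQdef
  set P := ∏ a ∈ S, (1 + ‖a‖) with hPdef
  have hP1 : 1 ≤ P := by
    calc (1:ℝ) = ∏ _a ∈ S, (1:ℝ) := by simp
      _ ≤ ∏ a ∈ S, (1 + ‖a‖) :=
          Finset.prod_le_prod (fun _ _ => zero_le_one) (fun a _ => by linarith [norm_nonneg a])
  have hub : ∀ a ∈ S, ‖z - a‖ ≤ (1 + ‖a‖) * R := by
    intro a ha
    have h1 : ‖z‖ ≤ R := norm_le_sqrt z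
    calc ‖z - a‖ ≤ ‖z‖ + ‖a‖ := norm_sub_le _ _
      _ ≤ (1 + ‖a‖) * R := by nlinarith [norm_nonneg a]
  have hQle : Q ≤ P * R ^ 2 := by
    calc Q ≤ ∏ a ∈ S, (1 + ‖a‖) * R :=
          Finset.prod_le_prod (fun a ha => (hu a ha).le) hub
      _ = P * R ^ S.card := by rw [Finset.prod_mul_distrib, Finset.prod_const]
      _ ≤ P * R ^ 2 := by
          apply mul_le_mul_of_nonneg_left (pow_le_pow_right₀ hR1 hS) (by linarith)
  have hterm1 : 2 / R ≤ 2 * P * (R / Q) := by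
    rw [← mul_div_assoc, div_le_div_iff₀ hRpos hQpos]
    nlinarith
  have hterm2 : ∀ a ∈ S, 1 / ‖z - a‖ ≤ P * (R / Q) := by
    intro a ha
    have herase : ∏ b ∈ S.erase a, ‖z - b‖ ≤ P * R := by
      calc ∏ b ∈ S.erase a, ‖z - b‖ ≤ ∏ b ∈ S.erase a, (1 + ‖b‖) * R :=
            Finset.prod_le_prod (fun b hb => (hu b (Finset.mem_of_mem_erase hb)).le)
              (fun b hb => hub b (Finset.mem_of_mem_erase hb))
        _ = (∏ b ∈ S.erase a, (1 + ‖b‖)) * R ^ (S.erase a).card := by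
            rw [Finset.prod_mul_distrib, Finset.prod_const]
        _ ≤ P * R := by
            apply mul_le_mul
            · have hsplitP : P = (1 + ‖a‖) * ∏ b ∈ S.erase a, (1 + ‖b‖) :=
                (Finset.mul_prod_erase S _ ha).symm
              have hprodE : (0:ℝ) ≤ ∏ b ∈ S.erase a, (1 + ‖b‖) :=
                Finset.prod_nonneg fun b _ => by linarith [norm_nonneg b]
              nlinarith [norm_nonneg a]
            · calc R ^ (S.erase a).card ≤ R ^ 1 := by
                    apply pow_le_pow_right₀ hR1
                    rw [Finset.card_erase_of_mem ha]; omega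
                _ = R := pow_one R
            · positivity
            · linarith
    have hQsplit : Q = ‖z - a‖ * ∏ b ∈ S.erase a, ‖z - b‖ :=
      (Finset.mul_prod_erase S _ ha).symm
    have h5 : ‖z - a‖ * (∏ b ∈ S.erase a, ‖z - b‖) ≤ ‖z - a‖ * (P * R) :=
      mul_le_mul_of_nonneg_left herase (hu a ha).le
    rw [← mul_div_assoc, div_le_div_iff₀ (hu a ha) hQpos, one_mul, hQsplit]
    nlinarith
  have hsum : ∑ a ∈ S, 1 / ‖z - a‖ ≤ 2 * (P * (R / Q)) := by
    calc ∑ a ∈ S, 1 / ‖z - a‖ ≤ ∑ _a ∈ S, P * (R / Q) := Finset.sum_le_sum hterm2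
      _ = S.card * (P * (R / Q)) := by rw [Finset.sum_const, nsmul_eq_mul]
      _ ≤ 2 * (P * (R / Q)) := by
          apply mul_le_mul_of_nonneg_right _ (by positivity)
          exact_mod_cast hS
  have : vossC S * (R / Q) = 4 * P * (R / Q) := by rw [vossC]
  rw [this]
  calc 2 / R + ∑ a ∈ S, 1 / ‖z - a‖ ≤ 2 * P * (R / Q) + 2 * (P * (R / Q)) :=
        add_le_add hterm1 hsum
    _ = 4 * P * (R / Q) := by ring

theorem vossF_nonneg (S : Finset ℂ) (z : ℂ) : 0 ≤ vossF S z := by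
  apply add_nonneg
  · apply Real.log_nonneg; nlinarith [sq_nonneg ‖z‖]
  · exact Finset.sum_nonneg fun a _ => Real.log_nonneg
      (le_add_of_nonneg_right (inv_nonneg.2 (norm_nonneg _)))

theorem vossF_large (S : Finset ℂ) {z : ℂ} {c : ℝ} (hc : 0 ≤ c) (h : c ≤ ‖z‖) :
    Real.log (1 + c) ≤ vossF S z := by
  have h1 : 1 + c ≤ 2 + ‖z‖ ^ 2 := by nlinarith [sq_nonneg (‖z‖ - 1), norm_nonneg z]
  have h2 : Real.log (1 + c) ≤ Real.log (2 + ‖z‖ ^ 2) :=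
    Real.log_le_log (by linarith) h1
  unfold vossF
  have := Finset.sum_nonneg fun a (_ : a ∈ S) => Real.log_nonneg
      (le_add_of_nonneg_right (inv_nonneg.2 (norm_nonneg (z - a))))
  linarith

theorem vossF_close (S : Finset ℂ) {z a : ℂ} (ha : a ∈ S) {c : ℝ} (hc : 0 < c)
    (hz : z ≠ a) (h : ‖z - a‖ ≤ c⁻¹) : Real.log (1 + c) ≤ vossF S z := by
  have hu : 0 < ‖z - a‖ := norm_pos_iff.2 (sub_ne_zero.2 hz)
  have hinv : c ≤ ‖z - a‖⁻¹ := by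
    rw [le_inv_comm₀ hc hu]
    exact h
  have h2 : Real.log (1 + c) ≤ Real.log (1 + ‖z - a‖⁻¹) :=
    Real.log_le_log (by linarith) (by linarith)
  have h3 : Real.log (1 + ‖z - a‖⁻¹) ≤ ∑ b ∈ S, Real.log (1 + ‖z - b‖⁻¹) :=
    Finset.single_le_sum (f := fun b => Real.log (1 + ‖z - b‖⁻¹))
      (fun b _ => Real.log_nonneg (le_add_of_nonneg_right (inv_nonneg.2 (norm_nonneg _)))) ha
  have h4 : 0 ≤ Real.log (2 + ‖z‖ ^ 2) := Real.log_nonneg (by nlinarith [sq_nonneg ‖z‖])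
  unfold vossF
  linarith

theorem vossF_hasDerivAt (S : Finset ℂ) (hS : S.card ≤ 2) {γ : ℝ → ℂ} {w : ℂ} {t : ℝ}
    (hγ : HasDerivAt γ w t) (hz : ∀ a ∈ S, γ t ≠ a) :
    ∃ d, HasDerivAt (fun u => vossF S (γ u)) d t ∧
      |d| ≤ vossC S * (Real.sqrt (1 + ‖γ t‖ ^ 2) / ∏ a ∈ S, ‖γ t - a‖) * ‖w‖ := by
  -- the main (log (2 + ‖z‖²)) term
  have hq := hasDerivAt_normsq_comp hγ
  have hQ : (γ t).re ^ 2 + (γ t).im ^ 2 = ‖γ t‖ ^ 2 := by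
    rw [Complex.sq_norm, Complex.normSq_apply]; ring
  have hmain0 : HasDerivAt (fun u => Real.log (2 + ((γ u).re ^ 2 + (γ u).im ^ 2)))
      ((2 * ((γ t).re * w.re + (γ t).im * w.im)) / (2 + ((γ t).re ^ 2 + (γ t).im ^ 2))) t := by
    have h1 := ((hasDerivAt_const t (2:ℝ)).fun_add hq)
    have h2 := h1.log (by nlinarith [sq_nonneg (γ t).re, sq_nonneg (γ t).im])
    simpa using h2
  have hmain : HasDerivAt (fun u => Real.log (2 + ‖γ u‖ ^ 2))
      ((2 * ((γ t).re * w.re + (γ t).im * w.im)) / (2 + ((γ t).re ^ 2 + (γ t).im ^ 2))) t := by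
    have heq : (fun u => Real.log (2 + ‖γ u‖ ^ 2)) =
        (fun u => Real.log (2 + ((γ u).re ^ 2 + (γ u).im ^ 2))) := by
      funext u
      rw [show (γ u).re ^ 2 + (γ u).im ^ 2 = ‖γ u‖ ^ 2 from by
        rw [Complex.sq_norm, Complex.normSq_apply]; ring]
    rw [heq]; exact hmain0
  set dmain := (2 * ((γ t).re * w.re + (γ t).im * w.im)) / (2 + ((γ t).re ^ 2 + (γ t).im ^ 2))
    with hdmain
  have hmainbd : |dmain| ≤ 2 / Real.sqrt (1 + ‖γ t‖ ^ 2) * ‖w‖ := by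
    set r := ‖γ t‖ with hr
    have hrn : 0 ≤ r := norm_nonneg _
    set R := Real.sqrt (1 + r ^ 2) with hR
    have hR1 : 1 ≤ R := one_le_sqrt' (γ t)
    have hRpos : 0 < R := lt_of_lt_of_le one_pos hR1
    have hRsq : R ^ 2 = 1 + r ^ 2 := Real.sq_sqrt (by positivity)
    have hrR : r ≤ R := norm_le_sqrt (γ t)
    have hcs := cs2 (γ t) w
    have hden : (0:ℝ) < 2 + ((γ t).re ^ 2 + (γ t).im ^ 2) := by
      nlinarith [sq_nonneg (γ t).re, sq_nonneg (γ t).im]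
    rw [hdmain, abs_div, abs_of_pos hden]
    rw [div_le_iff₀ hden]
    have h1 : |2 * ((γ t).re * w.re + (γ t).im * w.im)| ≤ 2 * (r * ‖w‖) := by
      rw [abs_mul, abs_two]
      exact mul_le_mul_of_nonneg_left hcs (by norm_num)
    -- suffices: 2 * r * ‖w‖ ≤ (2/R * ‖w‖) * (2 + r²), i.e. r * R ≤ 2 + r²
    have h2 : r * R ≤ 2 + r ^ 2 := by nlinarith
    have h3 : 2 + ((γ t).re ^ 2 + (γ t).im ^ 2) = 2 + r ^ 2 := by rw [hQ]
    rw [h3]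
    have hw : 0 ≤ ‖w‖ := norm_nonneg w
    calc |2 * ((γ t).re * w.re + (γ t).im * w.im)| ≤ 2 * (r * ‖w‖) := h1
      _ ≤ 2 / R * ‖w‖ * (2 + r ^ 2) := by
          rw [div_mul_eq_mul_div, div_mul_eq_mul_div, le_div_iff₀ hRpos]
          nlinarith
  -- the puncture terms
  have hpunct : ∀ a : ℂ, ∃ d : ℝ, a ∈ S →
      HasDerivAt (fun u => Real.log (1 + ‖γ u - a‖⁻¹)) d t ∧ |d| ≤ 1 / ‖γ t - a‖ * ‖w‖ := by
    intro a
    by_cases ha : a ∈ S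
    swap
    · exact ⟨0, fun h => absurd h ha⟩
    have hza : γ t - a ≠ 0 := sub_ne_zero.2 (hz a ha)
    have hu0 : 0 < ‖γ t - a‖ := norm_pos_iff.2 hza
    obtain ⟨du, hdu, hdub⟩ := hasDerivAt_norm_comp (γ := fun u => γ u - a) (hγ.sub_const a) hza
    have hinv : HasDerivAt (fun u => ‖γ u - a‖⁻¹) (-du / ‖γ t - a‖ ^ 2) t := hdu.inv hu0.ne'
    have hlog0 : HasDerivAt (fun u => Real.log (1 + ‖γ u - a‖⁻¹))
        ((-du / ‖γ t - a‖ ^ 2) / (1 + ‖γ t - a‖⁻¹)) t := by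
      have h1 := (hasDerivAt_const t (1:ℝ)).fun_add hinv
      have h2 := h1.log (by positivity)
      simpa using h2
    refine ⟨_, fun _ => ⟨hlog0, ?_⟩⟩
    have hpos1 : (0:ℝ) < 1 + ‖γ t - a‖⁻¹ := by positivity
    rw [abs_div, abs_of_pos hpos1, abs_div, abs_neg, abs_of_pos (pow_pos hu0 2), div_div]
    have hden : ‖γ t - a‖ ≤ ‖γ t - a‖ ^ 2 * (1 + ‖γ t - a‖⁻¹) := by
      have : ‖γ t - a‖ ^ 2 * (1 + ‖γ t - a‖⁻¹) = ‖γ t - a‖ ^ 2 + ‖γ t - a‖ := by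
        rw [mul_add, mul_one, sq, mul_assoc, mul_inv_cancel₀ hu0.ne', mul_one]
      nlinarith [sq_nonneg ‖γ t - a‖]
    calc |du| / (‖γ t - a‖ ^ 2 * (1 + ‖γ t - a‖⁻¹)) ≤ ‖w‖ / ‖γ t - a‖ :=
          div_le_div₀ (norm_nonneg w) hdub hu0 hden
      _ = 1 / ‖γ t - a‖ * ‖w‖ := by ring
  choose dp hdp using hpunct
  have hsum : HasDerivAt (fun u => ∑ a ∈ S, Real.log (1 + ‖γ u - a‖⁻¹)) (∑ a ∈ S, dp a) t :=
    HasDerivAt.fun_sum fun a ha => (hdp a ha).1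
  refine ⟨dmain + ∑ a ∈ S, dp a, ?_, ?_⟩
  · have := hmain.fun_add hsum
    simpa [vossF] using this
  · have habs : |dmain + ∑ a ∈ S, dp a| ≤ |dmain| + ∑ a ∈ S, |dp a| :=
      (abs_add_le _ _).trans (by gcongr; exact Finset.abs_sum_le_sum_abs _ _)
    have hsumbd : ∑ a ∈ S, |dp a| ≤ ∑ a ∈ S, 1 / ‖γ t - a‖ * ‖w‖ :=
      Finset.sum_le_sum fun a ha => (hdp a ha).2
    have hkey := voss_key_ineq S hS (γ t) hz
    have hw : 0 ≤ ‖w‖ := norm_nonneg w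
    have h6 : (2 / Real.sqrt (1 + ‖γ t‖ ^ 2) + ∑ a ∈ S, 1 / ‖γ t - a‖) * ‖w‖ ≤
        vossC S * (Real.sqrt (1 + ‖γ t‖ ^ 2) / ∏ a ∈ S, ‖γ t - a‖) * ‖w‖ :=
      mul_le_mul_of_nonneg_right hkey hw
    calc |dmain + ∑ a ∈ S, dp a| ≤ |dmain| + ∑ a ∈ S, |dp a| := habs
      _ ≤ 2 / Real.sqrt (1 + ‖γ t‖ ^ 2) * ‖w‖ + ∑ a ∈ S, 1 / ‖γ t - a‖ * ‖w‖ :=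
          add_le_add hmainbd hsumbd
      _ = (2 / Real.sqrt (1 + ‖γ t‖ ^ 2) + ∑ a ∈ S, 1 / ‖γ t - a‖) * ‖w‖ := by
          rw [← Finset.sum_mul]; ring
      _ ≤ _ := h6

set_option maxHeartbeats 1000000 in
theorem vossF_continuousOn (S : Finset ℂ) : ContinuousOn (vossF S) ((S : Set ℂ))ᶜ := by
  intro z hz
  apply ContinuousAt.continuousWithinAt
  have hin : ContinuousAt (fun z : ℂ => 2 + ‖z‖ ^ 2) z :=
    (continuous_const.add (continuous_norm.pow 2)).continuousAt
  have h1 : ContinuousAt (fun z : ℂ => Real.log (2 + ‖z‖ ^ 2)) z :=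
    hin.log (show (2 + ‖z‖ ^ 2) ≠ 0 by positivity)
  have h2 : ∀ a ∈ S, ContinuousAt (fun z : ℂ => Real.log (1 + ‖z - a‖⁻¹)) z := by
    intro a ha
    have hza : z - a ≠ 0 := sub_ne_zero.2 fun h => hz (by rw [h]; exact_mod_cast ha)
    have hn : ‖z - a‖ ≠ 0 := norm_ne_zero_iff.2 hza
    have hin2 : ContinuousAt (fun z : ℂ => 1 + ‖z - a‖⁻¹) z :=
      continuousAt_const.add
        (((continuous_id.sub continuous_const).norm.continuousAt).inv₀ hn)
    exact hin2.log (show (1 + ‖z - a‖⁻¹) ≠ 0 by positivity)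
  have h3 : ContinuousAt (fun z : ℂ => ∑ a ∈ S, Real.log (1 + ‖z - a‖⁻¹)) z := by
    unfold ContinuousAt
    exact tendsto_finset_sum S fun a ha => h2 a ha
  exact h1.add h3

theorem lam_continuousOn (S : Finset ℂ) :
    ContinuousOn (fun z : ℂ => Real.sqrt (1 + ‖z‖ ^ 2) / ∏ a ∈ S, ‖z - a‖) ((S : Set ℂ))ᶜ := by
  intro z hz
  apply ContinuousAt.continuousWithinAt
  have h1 : ContinuousAt (fun z : ℂ => Real.sqrt (1 + ‖z‖ ^ 2)) z :=
    (Real.continuous_sqrt.comp (continuous_const.add (continuous_norm.pow 2))).continuousAt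
  have h2 : ContinuousAt (fun z : ℂ => ∏ a ∈ S, ‖z - a‖) z :=
    (continuous_finset_prod S fun a _ =>
      continuous_norm.comp (continuous_id.sub continuous_const)).continuousAt
  have h3 : (∏ a ∈ S, ‖z - a‖) ≠ 0 := by
    apply ne_of_gt
    apply Finset.prod_pos
    intro a ha
    exact norm_pos_iff.2 (sub_ne_zero.2 fun h => hz (by rw [h]; exact_mod_cast ha))
  exact h1.div h2 h3

/-- FTC-type inequality with a finite set of exceptional points. -/
theorem ftc_ineq (E : Finset ℝ) :
    ∀ (g g' φ : ℝ → ℝ) (a b : ℝ), a ≤ b → ContinuousOn g (Set.Icc a b) →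
      (∀ x ∈ Set.Ioo a b, x ∉ E → HasDerivAt g (g' x) x) →
      IntegrableOn φ (Set.Icc a b) →
      (∀ x ∈ Set.Ioo a b, x ∉ E → g' x ≤ φ x) →
      g b - g a ≤ ∫ y in a..b, φ y := by
  induction E using Finset.induction_on with
  | empty =>
    intro g g' φ a b hab hc hd hi hb
    exact intervalIntegral.sub_le_integral_of_hasDeriv_right_of_le hab hc
      (fun x hx => (hd x hx (by simp)).hasDerivWithinAt) hi (fun x hx => hb x hx (by simp))
  | @insert c E hcE ih =>
    intro g g' φ a b hab hc hd hi hb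
    by_cases hcab : c ∈ Set.Ioo a b
    · have h1 : g c - g a ≤ ∫ y in a..c, φ y := by
        apply ih g g' φ a c hcab.1.le (hc.mono (Set.Icc_subset_Icc le_rfl hcab.2.le))
          (fun x hx hxE => hd x ⟨hx.1, hx.2.trans hcab.2⟩ ?_)
          (hi.mono_set (Set.Icc_subset_Icc le_rfl hcab.2.le))
          (fun x hx hxE => hb x ⟨hx.1, hx.2.trans hcab.2⟩ ?_)
        · simp only [Finset.mem_insert, not_or]
          exact ⟨ne_of_lt hx.2, hxE⟩
        · simp only [Finset.mem_insert, not_or]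
          exact ⟨ne_of_lt hx.2, hxE⟩
      have h2 : g b - g c ≤ ∫ y in c..b, φ y := by
        apply ih g g' φ c b hcab.2.le (hc.mono (Set.Icc_subset_Icc hcab.1.le le_rfl))
          (fun x hx hxE => hd x ⟨hcab.1.trans hx.1, hx.2⟩ ?_)
          (hi.mono_set (Set.Icc_subset_Icc hcab.1.le le_rfl))
          (fun x hx hxE => hb x ⟨hcab.1.trans hx.1, hx.2⟩ ?_)
        · simp only [Finset.mem_insert, not_or]
          exact ⟨ne_of_gt hx.1, hxE⟩
        · simp only [Finset.mem_insert, not_or]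
          exact ⟨ne_of_gt hx.1, hxE⟩
      have hint1 : IntervalIntegrable φ volume a c := by
        rw [intervalIntegrable_iff_integrableOn_Icc_of_le hcab.1.le]
        exact hi.mono_set (Set.Icc_subset_Icc le_rfl hcab.2.le)
      have hint2 : IntervalIntegrable φ volume c b := by
        rw [intervalIntegrable_iff_integrableOn_Icc_of_le hcab.2.le]
        exact hi.mono_set (Set.Icc_subset_Icc hcab.1.le le_rfl)
      have hadd := intervalIntegral.integral_add_adjacent_intervals hint1 hint2
      linarith
    · apply ih g g' φ a b hab hc (fun x hx hxE => hd x hx ?_) hi (fun x hx hxE => hb x hx ?_)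
      · simp only [Finset.mem_insert, not_or]
        exact ⟨fun h => hcab (h ▸ hx), hxE⟩
      · simp only [Finset.mem_insert, not_or]
        exact ⟨fun h => hcab (h ▸ hx), hxE⟩


/-- **Completeness of the Voss-type metric.**  For a set `S ⊆ ℂ` of at most
two points, the conformal metric `((1 + |z|²)/∏_{a ∈ S} |z - a|²)|dz|²` on
`U = ℂ ∖ S` is complete: every divergent piecewise C¹ path has infinite
length.  (This is the completeness computation for the Voss-type weakly
complete flat fronts, with `ω = dξ/∏ (ξ - α_j)` and `ρ = ξ`.) -/
theorem voss_metric_complete (S : Finset ℂ) (hS : S.card ≤ 2) :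
    MetricComplete ((S : Set ℂ))ᶜ
      (fun z => Real.sqrt (1 + ‖z‖ ^ 2) / ∏ a ∈ S, ‖z - a‖) := by
  intro γ γ' hmem hpc hdiv
  obtain ⟨hγc, D, hDfin, hderiv, hγ'c⟩ := hpc
  set lam : ℂ → ℝ := fun z => Real.sqrt (1 + ‖z‖ ^ 2) / ∏ a ∈ S, ‖z - a‖ with hlam
  show ∫⁻ t in Set.Ico (0:ℝ) 1, ENNReal.ofReal (lam (γ t) * ‖γ' t‖) = ⊤
  by_contra hne
  set I := ∫⁻ t in Set.Ico (0:ℝ) 1, ENNReal.ofReal (lam (γ t) * ‖γ' t‖) with hIdef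
  have hIlt : I < ⊤ := lt_top_iff_ne_top.2 hne
  have hlamnn : ∀ z, 0 ≤ lam z := fun z =>
    div_nonneg (Real.sqrt_nonneg _) (Finset.prod_nonneg fun a _ => norm_nonneg _)
  -- the key length estimate
  have hle : ∀ s ∈ Set.Ico (0:ℝ) 1, vossF S (γ s) ≤ vossF S (γ 0) + vossC S * I.toReal := by
    rintro s ⟨hs0, hs1⟩
    rcases eq_or_lt_of_le hs0 with rfl | hs0'
    · have : 0 ≤ vossC S * I.toReal := mul_nonneg (vossC_nonneg S) ENNReal.toReal_nonneg
      linarith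
    set E := (hDfin s hs1).toFinset with hE
    set g : ℝ → ℝ := fun t => vossF S (γ t) with hg
    set φ : ℝ → ℝ := fun t => vossC S * (lam (γ t) * ‖γ' t‖) with hφ
    have hIccsub : Set.Icc (0:ℝ) s ⊆ Set.Ico 0 1 := fun x hx => ⟨hx.1, lt_of_le_of_lt hx.2 hs1⟩
    have hgc : ContinuousOn g (Set.Icc 0 s) :=
      (vossF_continuousOn S).comp (hγc.mono hIccsub) (fun x hx => hmem x (hIccsub hx))
    have hder : ∀ x ∈ Set.Ioo (0:ℝ) s, x ∉ E →
        HasDerivAt g (deriv g x) x ∧ deriv g x ≤ φ x := by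
      intro x hx hxE
      have hxI : x ∈ Set.Ico (0:ℝ) 1 := ⟨hx.1.le, lt_trans hx.2 hs1⟩
      have hxD : x ∉ D := fun h => hxE ((hDfin s hs1).mem_toFinset.2 ⟨h, hx.1.le, hx.2.le⟩)
      have hgd := hderiv x ⟨hxI, hxD⟩
      have hzx : ∀ a ∈ S, γ x ≠ a := by
        intro a ha h
        exact (hmem x hxI) (by rw [h]; exact_mod_cast ha)
      obtain ⟨d, hd, hdb⟩ := vossF_hasDerivAt S hS hgd hzx
      have hdeq : deriv g x = d := hd.deriv
      refine ⟨hdeq ▸ hd, ?_⟩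
      rw [hdeq]
      calc d ≤ |d| := le_abs_self d
        _ ≤ vossC S * lam (γ x) * ‖γ' x‖ := hdb
        _ = φ x := by rw [hφ]; ring
    -- integrability of φ on [0,s]
    have hD'fin : (D ∩ Set.Icc 0 s).Finite := hDfin s hs1
    have hnull : volume (D ∩ Set.Icc 0 s) = 0 := hD'fin.measure_zero _
    have haeq : ((Set.Icc (0:ℝ) s \ (D ∩ Set.Icc 0 s) : Set ℝ)) =ᵐ[volume] (Set.Icc (0:ℝ) s : Set ℝ) :=
      MeasureTheory.diff_ae_eq_self.2 (measure_mono_null Set.inter_subset_right hnull)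
    have hrestr : volume.restrict (Set.Icc (0:ℝ) s) =
        volume.restrict (Set.Icc (0:ℝ) s \ (D ∩ Set.Icc 0 s)) :=
      (Measure.restrict_congr_set haeq).symm
    have hmeas' : MeasurableSet (Set.Icc (0:ℝ) s \ (D ∩ Set.Icc 0 s)) :=
      measurableSet_Icc.diff hD'fin.measurableSet
    have hsub2 : Set.Icc (0:ℝ) s \ (D ∩ Set.Icc 0 s) ⊆ Set.Ico 0 1 \ D := by
      rintro x ⟨hx1, hx2⟩
      exact ⟨hIccsub hx1, fun hD => hx2 ⟨hD, hx1⟩⟩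
    have hγ'meas : AEStronglyMeasurable γ' (volume.restrict (Set.Icc (0:ℝ) s)) := by
      rw [hrestr]
      exact (hγ'c.mono hsub2).aestronglyMeasurable hmeas'
    have hlamγ : ContinuousOn (fun t => lam (γ t)) (Set.Icc (0:ℝ) s) :=
      (lam_continuousOn S).comp (hγc.mono hIccsub) (fun x hx => hmem x (hIccsub hx))
    have hφmeas : AEStronglyMeasurable φ (volume.restrict (Set.Icc (0:ℝ) s)) :=
      (((hlamγ.aestronglyMeasurable measurableSet_Icc).mul hγ'meas.norm).const_mul _)
    have hφnonneg : ∀ t, 0 ≤ φ t := fun t =>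
      mul_nonneg (vossC_nonneg S) (mul_nonneg (hlamnn _) (norm_nonneg _))
    have hlint : ∀ A : Set ℝ, A ⊆ Set.Ico (0:ℝ) 1 →
        ∫⁻ t in A, ENNReal.ofReal (φ t) ≤ ENNReal.ofReal (vossC S) * I := by
      intro A hA
      have h1 : ∀ t, ENNReal.ofReal (φ t) =
          ENNReal.ofReal (vossC S) * ENNReal.ofReal (lam (γ t) * ‖γ' t‖) := fun t => by
        rw [← ENNReal.ofReal_mul (vossC_nonneg S)]
      calc ∫⁻ t in A, ENNReal.ofReal (φ t)
          = ∫⁻ t in A, ENNReal.ofReal (vossC S) * ENNReal.ofReal (lam (γ t) * ‖γ' t‖) := by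
            simp_rw [h1]
        _ = ENNReal.ofReal (vossC S) * ∫⁻ t in A, ENNReal.ofReal (lam (γ t) * ‖γ' t‖) :=
            lintegral_const_mul' _ _ ENNReal.ofReal_ne_top
        _ ≤ ENNReal.ofReal (vossC S) * I := by
            apply mul_le_mul_right
            rw [hIdef]
            exact lintegral_mono_set hA
    have hφint : IntegrableOn φ (Set.Icc 0 s) := by
      refine ⟨hφmeas, ?_⟩
      rw [hasFiniteIntegral_iff_ofReal (Filter.Eventually.of_forall hφnonneg)]
      exact lt_of_le_of_lt (hlint _ hIccsub)
        (ENNReal.mul_lt_top ENNReal.ofReal_lt_top hIlt)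
    have key := ftc_ineq E g (deriv g) φ 0 s hs0 hgc (fun x hx hxE => (hder x hx hxE).1) hφint
      (fun x hx hxE => (hder x hx hxE).2)
    have hIoc : ∫ y in (0:ℝ)..s, φ y = ∫ y in Set.Ioc (0:ℝ) s, φ y :=
      intervalIntegral.integral_of_le hs0
    have hφmeas2 : AEStronglyMeasurable φ (volume.restrict (Set.Ioc (0:ℝ) s)) :=
      hφmeas.mono_measure (Measure.restrict_mono Set.Ioc_subset_Icc_self le_rfl)
    have heq2 : ∫ y in Set.Ioc (0:ℝ) s, φ y =
        (∫⁻ y in Set.Ioc (0:ℝ) s, ENNReal.ofReal (φ y)).toReal :=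
      integral_eq_lintegral_of_nonneg_ae (Filter.Eventually.of_forall hφnonneg) hφmeas2
    have h4 := hlint (Set.Ioc 0 s) (fun x hx => ⟨hx.1.le, lt_of_le_of_lt hx.2 hs1⟩)
    have h5 : (∫⁻ y in Set.Ioc (0:ℝ) s, ENNReal.ofReal (φ y)).toReal ≤ vossC S * I.toReal := by
      calc (∫⁻ y in Set.Ioc (0:ℝ) s, ENNReal.ofReal (φ y)).toReal
          ≤ (ENNReal.ofReal (vossC S) * I).toReal := ENNReal.toReal_mono
            (ENNReal.mul_ne_top ENNReal.ofReal_ne_top hIlt.ne) h4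
        _ = vossC S * I.toReal := by
            rw [ENNReal.toReal_mul, ENNReal.toReal_ofReal (vossC_nonneg S)]
    have : g s - g 0 ≤ vossC S * I.toReal := by
      rw [hIoc, heq2] at key
      linarith
    simp only [hg] at this
    linarith
  -- choose a compact set that forces a contradiction
  set M := vossF S (γ 0) + vossC S * I.toReal with hM
  set n : ℕ := max 1 ⌈Real.exp M⌉₊ with hn
  have hn1 : (1:ℝ) ≤ (n:ℝ) := by exact_mod_cast le_max_left 1 ⌈Real.exp M⌉₊
  have hnpos : (0:ℝ) < (n:ℝ) := lt_of_lt_of_le one_pos hn1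
  have hnM : M < Real.log (1 + (n:ℝ)) := by
    have h1 : Real.exp M ≤ (n:ℝ) := by
      calc Real.exp M ≤ (⌈Real.exp M⌉₊ : ℝ) := Nat.le_ceil _
        _ ≤ (n:ℝ) := by exact_mod_cast le_max_right 1 ⌈Real.exp M⌉₊
    calc M = Real.log (Real.exp M) := (Real.log_exp M).symm
      _ < Real.log (1 + (n:ℝ)) := Real.log_lt_log (Real.exp_pos M) (by linarith)
  set K : Set ℂ := Metric.closedBall 0 (n:ℝ) ∩ ⋂ a ∈ S, (Metric.ball a ((n:ℝ)⁻¹))ᶜ with hK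
  have hKU : K ⊆ ((S : Set ℂ))ᶜ := by
    rintro z ⟨hz1, hz2⟩ hzS
    have hz3 := Set.mem_iInter₂.1 hz2 z (by exact_mod_cast hzS)
    apply hz3
    rw [Metric.mem_ball, dist_self]
    positivity
  have hKc : IsCompact K := (isCompact_closedBall 0 _).inter_right
    (isClosed_biInter fun a _ => Metric.isOpen_ball.isClosed_compl)
  obtain ⟨t₀, ht₀, hK'⟩ := hdiv K hKU hKc
  set t := (t₀ + 1) / 2 with ht
  have ht1 : t₀ < t := by rw [ht]; linarith [ht₀.2]
  have ht2 : t < 1 := by rw [ht]; linarith [ht₀.2]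
  have ht3 : t ∈ Set.Ico (0:ℝ) 1 := ⟨by rw [ht]; linarith [ht₀.1], ht2⟩
  have hγtU : γ t ∉ (S : Set ℂ) := hmem t ht3
  have hnotK := hK' t ht1 ht2
  have hFt : Real.log (1 + (n:ℝ)) ≤ vossF S (γ t) := by
    rw [hK, Set.mem_inter_iff, not_and_or] at hnotK
    rcases hnotK with h | h
    · rw [Metric.mem_closedBall, dist_zero_right, not_le] at h
      exact vossF_large S (le_of_lt hnpos) h.le
    · rw [Set.mem_iInter₂, not_forall] at h
      obtain ⟨a, h2⟩ := h
      rw [not_forall] at h2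
      obtain ⟨ha, h3⟩ := h2
      rw [Set.notMem_compl_iff, Metric.mem_ball, dist_eq_norm] at h3
      have hza : γ t ≠ a := fun hh => hγtU (by rw [hh]; exact_mod_cast ha)
      exact vossF_close S ha hnpos hza h3.le
  have := hle t ht3
  linarith
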